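/- Let α_1, ..., α_n ∈ F_{q^m} be F_q-linearly independent. Then for every x ∈ F_q^n, the rank weight of ψ_α(x) = (α_1 x_1, ..., α_n x_n) equals the Hamming weight of x. -/

import Mathlib

open Submodule Set

section

variable {K V ι : Type*} [DivisionRing K] [AddCommGroup V] [Module K V]

theorem span_range_smul_eq_span_range_support (c : ι → K) (v : ι → V) :
    span K (range fun i => c i • v i) = span K (range fun i : {i // c i ≠ 0} => v i) := by
  apply le_antisymm
  · rw [span_le]
    rintro _ ⟨i, rfl⟩
    by_cases hi : c i = 0
    · simp [hi]
    · exact smul_mem _ _ (subset_span ⟨⟨i, hi⟩, rfl⟩)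
  · rw [span_le]
    rintro _ ⟨⟨i, hi⟩, rfl⟩
    have hv : v i = (c i)⁻¹ • c i • v i := (inv_smul_smul₀ hi _).symm
    change v i ∈ _
    rw [hv]
    exact smul_mem _ _ (subset_span (mem_range_self i))

theorem LinearIndependent.finrank_span_range_smul [Fintype ι] [DecidableEq K] {v : ι → V}
    (hv : LinearIndependent K v) (c : ι → K) :
    Module.finrank K (span K (range fun i => c i • v i)) = Finset.card {i | c i ≠ 0} := by
  rw [span_range_smul_eq_span_range_support,
    finrank_span_eq_card (b := fun i : {i // c i ≠ 0} => v i) (hv.comp _ Subtype.val_injective),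
    Fintype.card_subtype]

end

theorem rank_weight_psi_eq_hamming
    (Fq Fqm : Type*) [Field Fq] [DecidableEq Fq] [Field Fqm] [Algebra Fq Fqm]
    (n : ℕ) (α : Fin n → Fqm) (hα : LinearIndependent Fq α) (x : Fin n → Fq) :
    Module.finrank Fq
        (Submodule.span Fq (Set.range fun i => α i * algebraMap Fq Fqm (x i))) =
      hammingNorm x := by
  have hψ : (fun i => α i * algebraMap Fq Fqm (x i)) = fun i => x i • α i := by
    ext i
    rw [Algebra.smul_def, mul_comm]
  rw [hψ, hα.finrank_span_range_smul]
  rfl
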